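/- Let q ≥ 2 be an integer and let X be a random variable with values in [0,1) whose law has density f, where f is lower semi-continuous at Lebesgue-almost every point of [0,1). Then for every n ≥ 0 and every 1-Lipschitz function h : [0,1] → ℝ, |E[h(T^n(X))] − ∫_0^1 h(t) dt| ≤ 1 − q^{−n} Σ_{k=1}^{q^n} inf_{I_{k;n}} f. In particular the Wasserstein-1 distance between the law of T^n(X) and Lebesgue measure on [0,1) tends to 0 as n → ∞. -/

import Mathlib

open MeasureTheory Set Filter

/-- The base-`q` map `T(x) = q·x − ⌊q·x⌋`. -/
noncomputable def T (q : ℕ) : ℝ → ℝ := fun x => Int.fract ((q : ℝ) * x)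

/-- The interval `I_{k;n} = [(k−1)q^{−n}, k·q^{−n})`. -/
noncomputable def Ikn (q n k : ℕ) : Set ℝ :=
  Set.Ico (((k : ℝ) - 1) / (q : ℝ) ^ n) ((k : ℝ) / (q : ℝ) ^ n)

/-!
Let `φ_n` be the step function equal to `inf_{I_{k;n}} f` on each cell `I_{k;n}`. Since `T^n` maps
every cell affinely onto `[0,1)`, the part `φ_n` of the density is carried by `T^n` to
`(∫ φ_n) · Lebesgue`, so `E h(T^n X) − ∫₀¹ h` only sees the excess `f − φ_n`, whose mass is
`1 − q^{−n} Σ_k inf_{I_{k;n}} f`; as `h` varies by at most `1` on `[0,1]`, this is the bound.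
At points of lower semicontinuity `φ_n → f`, so `∫ φ_n → 1` by dominated convergence and the
bound tends to `0`.
-/

open Topology

theorem T_iterate_eq_fract (q n : ℕ) {x : ℝ} (hx : x ∈ Ico (0 : ℝ) 1) :
    (T q)^[n] x = Int.fract ((q : ℝ) ^ n * x) := by
  induction n with
  | zero => simp [Int.fract_eq_self.2 hx]
  | succ n ih =>
    have h : (q : ℝ) * Int.fract ((q : ℝ) ^ n * x) =
        (q : ℝ) ^ (n + 1) * x - ((q * ⌊(q : ℝ) ^ n * x⌋ : ℤ) : ℝ) := by
      rw [Int.fract]; push_cast; ring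
    rw [Function.iterate_succ_apply', ih, T, h, Int.fract_sub_intCast]

section Ikn

variable {q n k : ℕ} {x : ℝ}

theorem mem_Ikn_iff (hq : 0 < q) (hk : 1 ≤ k) :
    x ∈ Ikn q n k ↔ 0 ≤ x ∧ ⌊(q : ℝ) ^ n * x⌋₊ + 1 = k := by
  have hQ : (0 : ℝ) < (q : ℝ) ^ n := by positivity
  obtain ⟨j, rfl⟩ : ∃ j, k = j + 1 := ⟨k - 1, by omega⟩
  simp only [Ikn, mem_Ico, div_le_iff₀ hQ, lt_div_iff₀ hQ, Nat.add_right_cancel_iff]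
  push_cast
  constructor
  · rintro ⟨h1, h2⟩
    have hx : 0 ≤ x := nonneg_of_mul_nonneg_right (by nlinarith [j.cast_nonneg (α := ℝ)]) hQ
    exact ⟨hx, (Nat.floor_eq_iff (by positivity)).2 ⟨by linarith, by linarith⟩⟩
  · rintro ⟨hx, hj⟩
    have := (Nat.floor_eq_iff (by positivity)).1 hj
    constructor <;> linarith

theorem measurableSet_Ikn : MeasurableSet (Ikn q n k) := measurableSet_Ico

theorem mem_Ikn_floor (hq : 0 < q) (hx : 0 ≤ x) : x ∈ Ikn q n (⌊(q : ℝ) ^ n * x⌋₊ + 1) :=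
  (mem_Ikn_iff hq (by omega)).2 ⟨hx, rfl⟩

theorem biUnion_Ikn (hq : 0 < q) : ⋃ k ∈ Finset.Icc 1 (q ^ n), Ikn q n k = Ico 0 1 := by
  have hQ : (0 : ℝ) < (q : ℝ) ^ n := by positivity
  ext x
  simp only [mem_iUnion, Finset.mem_Icc, exists_prop]
  constructor
  · rintro ⟨k, ⟨hk1, hkN⟩, hx⟩
    refine ⟨((mem_Ikn_iff hq hk1).1 hx).1, hx.2.trans_le ?_⟩
    rw [div_le_one hQ]
    exact_mod_cast hkN
  · rintro hx
    refine ⟨_, ⟨by omega, ?_⟩, mem_Ikn_floor hq hx.1⟩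
    rw [Nat.add_one_le_iff, Nat.floor_lt (mul_nonneg hQ.le hx.1)]
    push_cast
    nlinarith [hx.2]

theorem pairwise_disjoint_Ikn (hq : 0 < q) (N : ℕ) :
    (Finset.Icc 1 N : Set ℕ).Pairwise (Function.onFun Disjoint (Ikn q n)) := by
  intro j hj k hk hjk
  simp only [Finset.coe_Icc, mem_Icc] at hj hk
  exact disjoint_left.2 fun x hxj hxk =>
    hjk (((mem_Ikn_iff hq hj.1).1 hxj).2.symm.trans ((mem_Ikn_iff hq hk.1).1 hxk).2)

theorem volume_real_Ikn (hq : 0 < q) : volume.real (Ikn q n k) = ((q : ℝ) ^ n)⁻¹ := by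
  have hQ : (0 : ℝ) < (q : ℝ) ^ n := by positivity
  rw [Ikn, Real.volume_real_Ico_of_le (by gcongr; linarith)]
  field_simp
  ring

theorem dist_le_of_mem_Ikn {y : ℝ} (hx : x ∈ Ikn q n k) (hy : y ∈ Ikn q n k) :
    dist x y ≤ ((q : ℝ) ^ n)⁻¹ := by
  refine (Real.dist_le_of_mem_Icc (Ico_subset_Icc_self hx) (Ico_subset_Icc_self hy)).trans_eq ?_
  rw [← sub_div, sub_sub_cancel, one_div]

theorem integral_Ico_eq_sum_Ikn (hq : 0 < q) {F : ℝ → ℝ} (hF : IntegrableOn F (Ico 0 1)) :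
    ∫ x in Ico 0 1, F x = ∑ k ∈ Finset.Icc 1 (q ^ n), ∫ x in Ikn q n k, F x := by
  rw [← biUnion_Ikn hq] at hF ⊢
  exact integral_biUnion_finset _ (fun _ _ => measurableSet_Ikn) (pairwise_disjoint_Ikn hq _)
    (integrableOn_finset_iUnion.1 hF)

theorem setIntegral_Ikn_comp_fract (hq : 0 < q) (g : ℝ → ℝ) :
    ∫ x in Ikn q n k, g (Int.fract ((q : ℝ) ^ n * x)) =
      ((q : ℝ) ^ n)⁻¹ * ∫ t in (0 : ℝ)..1, g t := by
  have hQ : (0 : ℝ) < (q : ℝ) ^ n := by positivity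
  have hfract : EqOn (fun x => g (Int.fract ((q : ℝ) ^ n * x)))
      (fun x => g ((q : ℝ) ^ n * x + (1 - k))) (Ikn q n k) := by
    intro x hx
    simp only [Ikn, mem_Ico, div_le_iff₀ hQ, lt_div_iff₀ hQ] at hx
    refine congrArg g (Int.fract_eq_iff.2 ⟨by linarith, by linarith, k - 1, ?_⟩)
    push_cast
    ring
  rw [setIntegral_congr_fun measurableSet_Ikn hfract, Ikn, integral_Ico_eq_integral_Ioo,
    ← integral_Ioc_eq_integral_Ioo, ← intervalIntegral.integral_of_le (by gcongr; linarith),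
    intervalIntegral.integral_comp_mul_add _ hQ.ne', smul_eq_mul]
  congr 2 <;> field_simp <;> ring

end Ikn

-- `⌊q^n x⌋₊ + 1` indexes the cell `I_{k;n}` containing `x ≥ 0` (cells start at `k = 1`).
noncomputable def lowerStep (q n : ℕ) (f : ℝ → ℝ) (x : ℝ) : ℝ :=
  sInf (f '' Ikn q n (⌊(q : ℝ) ^ n * x⌋₊ + 1))

section lowerStep

variable {q n : ℕ} {f : ℝ → ℝ} {x : ℝ}

theorem lowerStep_eq_of_mem_Ikn (hq : 0 < q) {k : ℕ} (hk : 1 ≤ k) (hx : x ∈ Ikn q n k) :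
    lowerStep q n f x = sInf (f '' Ikn q n k) := by
  rw [lowerStep, ((mem_Ikn_iff hq hk).1 hx).2]

theorem lowerStep_nonneg (hf : ∀ x, 0 ≤ f x) : 0 ≤ lowerStep q n f x :=
  Real.sInf_nonneg (by rintro _ ⟨y, -, rfl⟩; exact hf y)

theorem lowerStep_le (hq : 0 < q) (hf : ∀ x, 0 ≤ f x) (hx : 0 ≤ x) : lowerStep q n f x ≤ f x :=
  csInf_le ⟨0, by rintro _ ⟨y, -, rfl⟩; exact hf y⟩ ⟨x, mem_Ikn_floor hq hx, rfl⟩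

theorem integrableOn_lowerStep_mul (hq : 0 < q) {H : ℝ → ℝ} (hH : IntegrableOn H (Ico 0 1)) :
    IntegrableOn (fun x => lowerStep q n f x * H x) (Ico 0 1) := by
  rw [← biUnion_Ikn hq (n := n)] at hH ⊢
  refine integrableOn_finset_iUnion.2 fun k hk => ?_
  refine IntegrableOn.congr_fun ((integrableOn_finset_iUnion.1 hH k hk).const_mul
    (sInf (f '' Ikn q n k))) (fun x hx => ?_) measurableSet_Ikn
  rw [lowerStep_eq_of_mem_Ikn hq (Finset.mem_Icc.1 hk).1 hx]

theorem integral_lowerStep_mul (hq : 0 < q) {H : ℝ → ℝ} (hH : IntegrableOn H (Ico 0 1)) :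
    ∫ x in Ico 0 1, lowerStep q n f x * H x =
      ∑ k ∈ Finset.Icc 1 (q ^ n), sInf (f '' Ikn q n k) * ∫ x in Ikn q n k, H x := by
  rw [integral_Ico_eq_sum_Ikn hq (integrableOn_lowerStep_mul hq hH)]
  refine Finset.sum_congr rfl fun k hk => ?_
  rw [← integral_const_mul]
  refine setIntegral_congr_fun measurableSet_Ikn fun x hx => ?_
  rw [lowerStep_eq_of_mem_Ikn hq (Finset.mem_Icc.1 hk).1 hx]

theorem integrableOn_lowerStep (hq : 0 < q) : IntegrableOn (lowerStep q n f) (Ico 0 1) := by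
  simpa using integrableOn_lowerStep_mul (f := f) (n := n) hq (integrableOn_const (C := (1 : ℝ))
    (by simp))

theorem integral_lowerStep (hq : 0 < q) :
    ∫ x in Ico 0 1, lowerStep q n f x =
      (q : ℝ) ^ (-(n : ℤ)) * ∑ k ∈ Finset.Icc 1 (q ^ n), sInf (f '' Ikn q n k) := by
  simpa [volume_real_Ikn hq, Finset.mul_sum, mul_comm] using
    integral_lowerStep_mul (f := f) (n := n) hq (integrableOn_const (C := (1 : ℝ)) (by simp))

theorem integral_lowerStep_mul_comp_fract (hq : 0 < q) {g : ℝ → ℝ}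
    (hg : IntegrableOn (fun x => g (Int.fract ((q : ℝ) ^ n * x))) (Ico 0 1)) :
    ∫ x in Ico 0 1, lowerStep q n f x * g (Int.fract ((q : ℝ) ^ n * x)) =
      (∫ t in (0 : ℝ)..1, g t) * ∫ x in Ico 0 1, lowerStep q n f x := by
  rw [integral_lowerStep_mul hq hg, integral_lowerStep hq, zpow_neg, zpow_natCast,
    Finset.mul_sum, Finset.mul_sum]
  refine Finset.sum_congr rfl fun k _ => ?_
  rw [setIntegral_Ikn_comp_fract hq]
  ring

theorem tendsto_lowerStep (hq : 1 < q) (hf : ∀ x, 0 ≤ f x) (hx : 0 ≤ x)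
    (hfx : LowerSemicontinuousAt f x) :
    Tendsto (fun n => lowerStep q n f x) atTop (𝓝 (f x)) := by
  have hq0 : 0 < q := by omega
  refine tendsto_order.2 ⟨fun a ha => ?_,
    fun a ha => Eventually.of_forall fun n => (lowerStep_le hq0 hf hx).trans_lt ha⟩
  obtain ⟨b, hab, hbf⟩ := exists_between ha
  obtain ⟨δ, hδ, hball⟩ := Metric.eventually_nhds_iff.1 (hfx b hbf)
  have hsmall : ∀ᶠ n in atTop, ((q : ℝ) ^ n)⁻¹ < δ :=
    (tendsto_inv_atTop_zero.comp (tendsto_pow_atTop_atTop_of_one_lt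
      (by exact_mod_cast hq))).eventually (gt_mem_nhds hδ)
  filter_upwards [hsmall] with n hn
  refine hab.trans_le (le_csInf ⟨_, mem_image_of_mem f (mem_Ikn_floor hq0 hx)⟩ ?_)
  rintro _ ⟨y, hy, rfl⟩
  exact (hball ((dist_le_of_mem_Ikn hy (mem_Ikn_floor hq0 hx)).trans_lt hn)).le

theorem tendsto_integral_lowerStep (hq : 1 < q) (hf_int : IntegrableOn f (Ico 0 1))
    (hf_nonneg : ∀ x, 0 ≤ f x)
    (hf_lsc : ∀ᵐ x, x ∈ Ico (0 : ℝ) 1 → LowerSemicontinuousAt f x) :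
    Tendsto (fun n => ∫ x in Ico 0 1, lowerStep q n f x) atTop (𝓝 (∫ x in Ico 0 1, f x)) := by
  refine tendsto_integral_of_dominated_convergence f
    (fun n => (integrableOn_lowerStep (by omega)).aestronglyMeasurable) hf_int (fun n => ?_) ?_
  · filter_upwards [ae_restrict_mem measurableSet_Ico] with x hx
    rw [Real.norm_of_nonneg (lowerStep_nonneg hf_nonneg)]
    exact lowerStep_le (by omega) hf_nonneg hx.1
  · filter_upwards [ae_restrict_of_ae hf_lsc, ae_restrict_mem measurableSet_Ico] with x hlsc hx
    exact tendsto_lowerStep hq hf_nonneg hx.1 (hlsc hx)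

end lowerStep

theorem abs_integral_mul_sub_le {α : Type*} [MeasurableSpace α] {μ : Measure α}
    {f φ G : α → ℝ} {a : ℝ} (hf : Integrable f μ) (hφ : Integrable φ μ) (hφf : ∀ᵐ x ∂μ, φ x ≤ f x)
    (hG : AEStronglyMeasurable G μ) (hGa : ∀ x, |G x - a| ≤ 1)
    (hGφ : ∫ x, φ x * G x ∂μ = a * ∫ x, φ x ∂μ) :
    |∫ x, f x * G x ∂μ - a * ∫ x, f x ∂μ| ≤ ∫ x, f x ∂μ - ∫ x, φ x ∂μ := by
  have hG_bdd : ∀ᵐ x ∂μ, ‖G x‖ ≤ ‖a‖ + 1 :=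
    ae_of_all _ fun x => norm_le_norm_add_const_of_dist_le (hGa x)
  have hfG : Integrable (fun x => f x * G x) μ := by
    simpa only [mul_comm] using hf.bdd_mul hG hG_bdd
  have hφG : Integrable (fun x => φ x * G x) μ := by
    simpa only [mul_comm] using hφ.bdd_mul hG hG_bdd
  have hexcess : ∫ x, f x * G x ∂μ - a * ∫ x, f x ∂μ = ∫ x, (f x - φ x) * (G x - a) ∂μ := by
    have hsplit : ∀ x, (f x - φ x) * (G x - a) = (f x * G x - f x * a) - (φ x * G x - φ x * a) :=
      fun x => by ring
    have hf' : Integrable (fun x => f x * G x - f x * a) μ := hfG.sub (hf.mul_const a)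
    have hφ' : Integrable (fun x => φ x * G x - φ x * a) μ := hφG.sub (hφ.mul_const a)
    simp_rw [hsplit]
    rw [integral_sub hf' hφ',
      integral_sub hfG (hf.mul_const a), integral_sub hφG (hφ.mul_const a), integral_mul_const,
      integral_mul_const, hGφ]
    ring
  rw [hexcess, ← integral_sub hf hφ, ← Real.norm_eq_abs]
  refine norm_integral_le_of_norm_le (hf.sub hφ) (hφf.mono fun x hx => ?_)
  rw [Real.norm_eq_abs, abs_mul, abs_of_nonneg (sub_nonneg.2 hx)]
  exact mul_le_of_le_one_right (sub_nonneg.2 hx) (hGa x)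

theorem abs_sub_intervalIntegral_le_one {g : ℝ → ℝ} (hg : LipschitzOnWith 1 g (Icc 0 1)) {s : ℝ}
    (hs : s ∈ Icc (0 : ℝ) 1) : |g s - ∫ t in (0 : ℝ)..1, g t| ≤ 1 := by
  have hint : IntervalIntegrable g volume 0 1 :=
    (hg.continuousOn.mono (uIcc_of_le zero_le_one).subset).intervalIntegrable
  have h := intervalIntegral.norm_integral_le_of_norm_le_const (a := 0) (b := 1) (C := 1)
    (f := fun t => g s - g t) fun t ht => by
      rw [uIoc_of_le zero_le_one] at ht
      have ht' : t ∈ Icc (0 : ℝ) 1 := Ioc_subset_Icc_self ht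
      calc ‖g s - g t‖ = dist (g s) (g t) := (dist_eq_norm _ _).symm
        _ ≤ 1 * dist s t := hg.dist_le_mul s hs t ht'
        _ ≤ 1 := by simpa using Real.dist_le_of_mem_Icc hs ht'
  rw [intervalIntegral.integral_sub intervalIntegrable_const hint] at h
  simpa using h

section density

variable {Ω : Type*} [MeasurableSpace Ω] {ℙ : Measure Ω} {X : Ω → ℝ} {f : ℝ → ℝ}

theorem integral_comp_eq_setIntegral_mul_density (hX : Measurable X) (hf_meas : Measurable f)
    (hf_nonneg : ∀ x, 0 ≤ f x) (hf_supp : ∀ x, x ∉ Ico (0 : ℝ) 1 → f x = 0)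
    (hlaw : ℙ.map X = volume.withDensity (fun x => ENNReal.ofReal (f x)))
    {F : ℝ → ℝ} (hF : Measurable F) :
    ∫ ω, F (X ω) ∂ℙ = ∫ x in Ico 0 1, f x * F x := by
  rw [← integral_map hX.aemeasurable hF.aestronglyMeasurable, hlaw,
    integral_withDensity_eq_integral_toReal_smul hf_meas.ennreal_ofReal
      (ae_of_all _ fun _ => ENNReal.ofReal_lt_top),
    setIntegral_eq_integral_of_forall_compl_eq_zero fun x hx => by simp [hf_supp x hx]]
  simp only [ENNReal.toReal_ofReal (hf_nonneg _), smul_eq_mul]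

theorem setIntegral_density_eq_one [IsProbabilityMeasure ℙ] (hX : Measurable X)
    (hf_meas : Measurable f) (hf_nonneg : ∀ x, 0 ≤ f x)
    (hf_supp : ∀ x, x ∉ Ico (0 : ℝ) 1 → f x = 0)
    (hlaw : ℙ.map X = volume.withDensity (fun x => ENNReal.ofReal (f x))) :
    ∫ x in Ico 0 1, f x = 1 := by
  simpa using (integral_comp_eq_setIntegral_mul_density hX hf_meas hf_nonneg hf_supp hlaw
    (measurable_const (a := (1 : ℝ)))).symm

theorem integrableOn_density [IsProbabilityMeasure ℙ] (hX : Measurable X)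
    (hf_meas : Measurable f) (hf_nonneg : ∀ x, 0 ≤ f x)
    (hf_supp : ∀ x, x ∉ Ico (0 : ℝ) 1 → f x = 0)
    (hlaw : ℙ.map X = volume.withDensity (fun x => ENNReal.ofReal (f x))) :
    IntegrableOn f (Ico 0 1) :=
  Integrable.of_integral_ne_zero <| by
    rw [setIntegral_density_eq_one hX hf_meas hf_nonneg hf_supp hlaw]
    exact one_ne_zero

end density

theorem abs_integral_comp_T_iterate_sub_le {Ω : Type*} [MeasurableSpace Ω] {ℙ : Measure Ω}
    [IsProbabilityMeasure ℙ] {q : ℕ} (hq : 0 < q) {f : ℝ → ℝ} (hf_meas : Measurable f)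
    (hf_nonneg : ∀ x, 0 ≤ f x) (hf_supp : ∀ x, x ∉ Ico (0 : ℝ) 1 → f x = 0) {X : Ω → ℝ}
    (hX : Measurable X) (hXrange : ∀ ω, X ω ∈ Ico (0 : ℝ) 1)
    (hlaw : ℙ.map X = volume.withDensity (fun x => ENNReal.ofReal (f x))) (n : ℕ) {h : ℝ → ℝ}
    (hh : LipschitzOnWith 1 h (Icc 0 1)) :
    |(∫ ω, h ((T q)^[n] (X ω)) ∂ℙ) - ∫ t in (0 : ℝ)..1, h t|
      ≤ 1 - (q : ℝ) ^ (-(n : ℤ)) * ∑ k ∈ Finset.Icc 1 (q ^ n), sInf (f '' Ikn q n k) := by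
  obtain ⟨g, hg, hgh⟩ := hh.extend_real
  set G : ℝ → ℝ := fun x => g (Int.fract ((q : ℝ) ^ n * x))
  have hfract_mem : ∀ x : ℝ, Int.fract x ∈ Icc (0 : ℝ) 1 :=
    fun x => ⟨Int.fract_nonneg x, (Int.fract_lt_one x).le⟩
  have hG_meas : Measurable G :=
    hg.continuous.measurable.comp (measurable_fract.comp (measurable_const_mul _))
  have hGa : ∀ x, |G x - ∫ t in (0 : ℝ)..1, h t| ≤ 1 := fun x => by
    simpa only [G, ← hgh (hfract_mem _)] using abs_sub_intervalIntegral_le_one hh (hfract_mem _)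
  have hG_int : IntegrableOn G (Ico 0 1) :=
    Measure.integrableOn_of_bounded (by simp) hG_meas.aestronglyMeasurable
      (ae_of_all _ fun x => norm_le_norm_add_const_of_dist_le (hGa x))
  have hE : ∫ ω, h ((T q)^[n] (X ω)) ∂ℙ = ∫ x in Ico 0 1, f x * G x := by
    rw [← integral_comp_eq_setIntegral_mul_density hX hf_meas hf_nonneg hf_supp hlaw hG_meas]
    refine integral_congr_ae (ae_of_all _ fun ω => ?_)
    simp only [G, T_iterate_eq_fract q n (hXrange ω), hgh (hfract_mem _)]
  have hgh_int : ∫ t in (0 : ℝ)..1, h t = ∫ t in (0 : ℝ)..1, g t :=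
    intervalIntegral.integral_congr fun t ht => hgh (by rwa [uIcc_of_le zero_le_one] at ht)
  have hdev := abs_integral_mul_sub_le (integrableOn_density hX hf_meas hf_nonneg hf_supp hlaw)
    (integrableOn_lowerStep (n := n) hq)
    ((ae_restrict_mem measurableSet_Ico).mono fun x hx => lowerStep_le hq hf_nonneg hx.1)
    hG_meas.aestronglyMeasurable hGa
    (by rw [hgh_int]; exact integral_lowerStep_mul_comp_fract hq hG_int)
  rwa [← hE, setIntegral_density_eq_one hX hf_meas hf_nonneg hf_supp hlaw, mul_one,
    integral_lowerStep hq] at hdev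

theorem stmt8
    {Ω : Type*} [MeasurableSpace Ω] (ℙ : Measure Ω) [IsProbabilityMeasure ℙ]
    (q : ℕ) (hq : 2 ≤ q)
    (f : ℝ → ℝ) (hf_meas : Measurable f) (hf_nonneg : ∀ x, 0 ≤ f x)
    (hf_supp : ∀ x, x ∉ Set.Ico (0:ℝ) 1 → f x = 0)
    -- `f` is lower semi-continuous at Lebesgue-almost every point of `[0,1)`
    (hf_lsc : ∀ᵐ x ∂(volume : Measure ℝ),
      x ∈ Set.Ico (0:ℝ) 1 → LowerSemicontinuousAt f x)
    (X : Ω → ℝ) (hX : Measurable X) (hXrange : ∀ ω, X ω ∈ Set.Ico (0:ℝ) 1)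
    (hlaw : Measure.map X ℙ = volume.withDensity (fun x => ENNReal.ofReal (f x))) :
    -- bound for every `1`-Lipschitz test function `h : [0,1] → ℝ`
    (∀ n : ℕ, ∀ h : ℝ → ℝ, LipschitzOnWith 1 h (Set.Icc (0:ℝ) 1) →
      |(∫ ω, h ((T q)^[n] (X ω)) ∂ℙ) - ∫ t in (0:ℝ)..1, h t|
        ≤ 1 - (q : ℝ) ^ (-(n : ℤ)) * ∑ k ∈ Finset.Icc 1 (q ^ n), sInf (f '' Ikn q n k))
    -- in particular the Wasserstein-1 distance (in its Kantorovich–Rubinstein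
    -- dual form) between the law of `T^n(X)` and Lebesgue measure on `[0,1)`
    -- tends to `0`
    ∧ Tendsto (fun n : ℕ =>
        ⨆ h : {h : ℝ → ℝ // LipschitzOnWith 1 h (Set.Icc (0:ℝ) 1)},
          |(∫ ω, (h : ℝ → ℝ) ((T q)^[n] (X ω)) ∂ℙ) - ∫ t in (0:ℝ)..1, (h : ℝ → ℝ) t|)
        atTop (nhds 0) := by
  have hq0 : 0 < q := by omega
  have bound := fun n {h} (hh : LipschitzOnWith 1 h (Icc 0 1)) =>
    abs_integral_comp_T_iterate_sub_le hq0 hf_meas hf_nonneg hf_supp hX hXrange hlaw n hh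
  refine ⟨fun n h hh => bound n hh, ?_⟩
  have hlower := tendsto_integral_lowerStep (q := q) (by omega)
    (integrableOn_density hX hf_meas hf_nonneg hf_supp hlaw) hf_nonneg hf_lsc
  simp only [integral_lowerStep hq0,
    setIntegral_density_eq_one hX hf_meas hf_nonneg hf_supp hlaw] at hlower
  have : Nonempty {h : ℝ → ℝ // LipschitzOnWith 1 h (Icc (0 : ℝ) 1)} :=
    ⟨⟨id, LipschitzWith.id.lipschitzOnWith⟩⟩
  refine squeeze_zero (fun n => (abs_nonneg _).trans (le_ciSup ⟨_, forall_mem_range.2 fun h =>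
      bound n h.2⟩ (Classical.arbitrary _))) (fun n => ciSup_le fun h => bound n h.2) ?_
  simpa using (tendsto_const_nhds (x := (1 : ℝ))).sub hlower
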